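/- Let U be an ultrafilter on ℕ that is maximal for finite embeddability (i.e., V ≤_fe U for every ultrafilter V on ℕ). Then every set A ∈ U has positive upper Banach density, contains arbitrarily long arithmetic progressions, and is piecewise syndetic. -/
import Mathlib


/-- `A` is finitely embeddable in `B`: every finite subset of `A` has a
rightward translate contained in `B`. -/
def FE (A B : Set ℕ) : Prop :=
  ∀ F : Finset ℕ, (F : Set ℕ) ⊆ A → ∃ k : ℕ, ∀ a ∈ F, k + a ∈ B

/-- A set is thick if it contains arbitrarily long intervals. -/
def Thick (T : Set ℕ) : Prop :=
  ∀ n : ℕ, ∃ k : ℕ, ∀ i ≤ n, k + i ∈ T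

/-- A set is piecewise syndetic if some finite union of its translates is thick. -/
def PWSyndetic (A : Set ℕ) : Prop :=
  ∃ n : ℕ, Thick {m : ℕ | ∃ i ≤ n, ∃ a ∈ A, m = a + i}

/-- Upper Banach density. -/
noncomputable def BD (A : Set ℕ) : ℝ :=
  Filter.atTop.limsup
    (fun n : ℕ => (⨆ k : ℕ, ((A ∩ Set.Icc (k + 1) (k + n)).ncard : ℝ)) / n)

/-- Finite embeddability of ultrafilters. -/
def UFE (U V : Ultrafilter ℕ) : Prop :=
  ∀ B ∈ V, ∃ A ∈ U, FE A B

/-- `A` contains arbitrarily long arithmetic progressions. -/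
def HasAPs (A : Set ℕ) : Prop :=
  ∀ k : ℕ, ∃ a : ℕ, ∃ d ≥ 1, ∀ i < k, a + i * d ∈ A

open Filter Set

-- monotonicity
lemma hasAPs_mono {X Y : Set ℕ} (h : X ⊆ Y) (hX : HasAPs X) : HasAPs Y := by
  intro k
  obtain ⟨a, d, hd, hi⟩ := hX k
  exact ⟨a, d, hd, fun i hik => h (hi i hik)⟩

lemma pws_mono {X Y : Set ℕ} (h : X ⊆ Y) (hX : PWSyndetic X) : PWSyndetic Y := by
  obtain ⟨n, hn⟩ := hX
  refine ⟨n, fun L => ?_⟩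
  obtain ⟨k, hk⟩ := hn L
  refine ⟨k, fun i hi => ?_⟩
  obtain ⟨j, hj, a, ha, hEq⟩ := hk i hi
  exact ⟨j, hj, a, h ha, hEq⟩

lemma hasAPs_univ : HasAPs (Set.univ) :=
  fun _ => ⟨0, 1, le_refl 1, fun _ _ => Set.mem_univ _⟩

lemma pws_univ : PWSyndetic Set.univ :=
  ⟨0, fun L => ⟨0, fun i _ => ⟨0, le_refl 0, i, Set.mem_univ i, by omega⟩⟩⟩

lemma not_hasAPs_empty : ¬ HasAPs (∅ : Set ℕ) := by
  intro h
  obtain ⟨a, d, hd, hi⟩ := h 1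
  exact (hi 0 one_pos).elim

lemma not_pws_empty : ¬ PWSyndetic (∅ : Set ℕ) := by
  rintro ⟨n, hn⟩
  obtain ⟨k, hk⟩ := hn 0
  obtain ⟨i, _, a, ha, _⟩ := hk 0 le_rfl
  exact ha

-- partition regularity of piecewise syndeticity
lemma pws_union {X Y : Set ℕ} (h : PWSyndetic (X ∪ Y)) :
    PWSyndetic X ∨ PWSyndetic Y := by
  obtain ⟨n, hn⟩ := h
  by_cases hX : PWSyndetic X
  · exact Or.inl hX
  · right
    -- X not PWS: in particular the n-translate union of X is not thick
    have hnotthick : ¬ Thick {m : ℕ | ∃ i ≤ n, ∃ a ∈ X, m = a + i} := by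
      intro hth
      exact hX ⟨n, hth⟩
    rw [Thick] at hnotthick
    push_neg at hnotthick
    obtain ⟨L, hL⟩ := hnotthick
    refine ⟨n + L, fun Q => ?_⟩
    obtain ⟨s, hs⟩ := hn (Q + L)
    refine ⟨s + L, fun j hj => ?_⟩
    obtain ⟨i, hiL, hix⟩ := hL (s + j)
    have hqT : s + j + i ∈ {m : ℕ | ∃ i ≤ n, ∃ a ∈ X ∪ Y, m = a + i} := by
      have : s + (j + i) ∈ _ := hs (j + i) (by omega)
      simpa [add_assoc] using this
    obtain ⟨i', hi', a, ha, hEq⟩ := hqT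
    rcases ha with ha | ha
    · exact absurd ⟨i', hi', a, ha, hEq⟩ hix
    · refine ⟨i' + (L - i), by omega, a, ha, by omega⟩

-- finite van der Waerden via compactness from exists_mono_homothetic_copy
lemma vdw_finite (k : ℕ) :
    ∃ W : ℕ, ∀ C : ℕ → Bool, ∃ a d : ℕ, 1 ≤ d ∧ a + k * d ≤ W ∧
      ∀ i ≤ k, C (a + i * d) = C a := by
  by_contra hcon
  push_neg at hcon
  choose cw hcw using hcon
  classical
  haveI : Infinite ℕ := inferInstance
  set U : Ultrafilter ℕ := Filter.hyperfilter ℕ with hUdef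
  set C : ℕ → Bool := fun p => if {W | cw W p = true} ∈ U then true else false with hC
  have hagree : ∀ p : ℕ, ∀ᶠ W in (U : Filter ℕ), cw W p = C p := by
    intro p
    by_cases hm : {W | cw W p = true} ∈ U
    · filter_upwards [hm] with W hW
      simp [hC, hm, hW]
    · have hm' : {W | cw W p = true}ᶜ ∈ U := (Ultrafilter.compl_mem_iff_notMem).2 hm
      filter_upwards [hm'] with W hW
      simp only [Set.mem_compl_iff, Set.mem_setOf_eq] at hW
      simp [hC, hm, Bool.not_eq_true] at hW ⊢
      exact hW
  obtain ⟨d, hd, b, c, hmono⟩ :=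
    Combinatorics.exists_mono_homothetic_copy (Finset.range (k+1)) C
  have hall : ∀ᶠ W in (U : Filter ℕ), ∀ i ∈ Finset.range (k+1), cw W (b + i * d) = C (b + i * d) := by
    rw [Filter.eventually_all_finset]
    intro i _
    exact hagree (b + i * d)
  have hbig : ∀ᶠ W in (U : Filter ℕ), b + k * d ≤ W := by
    have : ∀ᶠ W in Filter.cofinite, b + k * d ≤ W := by
      rw [Nat.cofinite_eq_atTop]
      exact Filter.eventually_ge_atTop _
    exact this.filter_mono (Filter.hyperfilter_le_cofinite)
  obtain ⟨W, hW1, hW2⟩ := (hall.and hbig).exists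
  obtain ⟨i, hik, hicne⟩ := hcw W b d hd hW2
  apply hicne
  have e1 : cw W (b + i * d) = c := by
    rw [hW1 i (Finset.mem_range.2 (by omega))]
    have := hmono i (Finset.mem_range.2 (by omega))
    simpa [smul_eq_mul, mul_comm, add_comm] using this
  have e2 : cw W b = c := by
    have h0 := hW1 0 (Finset.mem_range.2 (by omega))
    have := hmono 0 (Finset.mem_range.2 (by omega))
    simp only [Nat.zero_mul, Nat.add_zero, smul_eq_mul, Nat.mul_zero, Nat.zero_add] at h0 this
    rw [h0, this]
  rw [e1, e2]


-- partition regularity of HasAPs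
open Classical in
lemma hasAPs_union {X Y : Set ℕ} (h : HasAPs (X ∪ Y)) :
    HasAPs X ∨ HasAPs Y := by
  by_contra hcon
  push_neg at hcon
  obtain ⟨hX, hY⟩ := hcon
  rw [HasAPs] at hX hY
  push_neg at hX hY
  obtain ⟨kX, hkX⟩ := hX
  obtain ⟨kY, hkY⟩ := hY
  set k := max kX kY with hk
  obtain ⟨W, hW⟩ := vdw_finite k
  obtain ⟨a, d, hd, hAP⟩ := h (W + 1)
  set C : ℕ → Bool := fun p => decide (a + p * d ∈ X) with hC
  obtain ⟨a', d', hd', hle, hmono⟩ := hW C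
  rcases hBool : C a' with hfalse | htrue
  · -- all points outside X, hence in Y
    obtain ⟨i, hik, hi⟩ := hkY (a + a' * d) (d' * d) (by exact Nat.one_le_iff_ne_zero.2 (by positivity))
    apply hi
    have hiW : a' + i * d' ≤ W := by
      have : i * d' ≤ k * d' := Nat.mul_le_mul_right _ (by omega)
      omega
    have hmem : a + (a' + i * d') * d ∈ X ∪ Y := by
      apply hAP
      omega
    have hCaux : C (a' + i * d') = false := by rw [hmono i (by omega), hBool]
    have hnotX : a + (a' + i * d') * d ∉ X := by
      intro hmm
      rw [hC] at hCaux
      simp only [decide_eq_false_iff_not] at hCaux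
      exact hCaux hmm
    have : a + (a' + i * d') * d ∈ Y := hmem.resolve_left hnotX
    have harith : a + a' * d + i * (d' * d) = a + (a' + i * d') * d := by ring
    rw [harith]
    exact this
  · obtain ⟨i, hik, hi⟩ := hkX (a + a' * d) (d' * d) (by exact Nat.one_le_iff_ne_zero.2 (by positivity))
    apply hi
    have hCaux : C (a' + i * d') = true := by rw [hmono i (by omega), hBool]
    rw [hC] at hCaux
    simp only [decide_eq_true_eq] at hCaux
    have harith : a + a' * d + i * (d' * d) = a + (a' + i * d') * d := by ring
    rw [harith]
    exact hCaux

-- ultrafilter whose every member has a partition-regular property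
lemma exists_ultrafilter_forall (P : Set ℕ → Prop)
    (hmono : ∀ {X Y : Set ℕ}, X ⊆ Y → P X → P Y)
    (huniv : P Set.univ) (hempty : ¬ P ∅)
    (hunion : ∀ X Y : Set ℕ, P (X ∪ Y) → P X ∨ P Y) :
    ∃ V : Ultrafilter ℕ, ∀ A ∈ V, P A := by
  let F : Filter ℕ :=
    { sets := {s | ¬ P sᶜ}
      univ_sets := by simpa using hempty
      sets_of_superset := by
        intro s t hs hst hPt
        exact hs (hmono (Set.compl_subset_compl.2 hst) hPt)
      inter_sets := by
        intro s t hs ht hPst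
        rw [Set.compl_inter] at hPst
        rcases hunion _ _ hPst with h | h
        · exact hs h
        · exact ht h }
  have hne : F.NeBot := by
    rw [Filter.neBot_iff]
    intro hbot
    have : (∅ : Set ℕ) ∈ F := by rw [hbot]; trivial
    have : ¬ P (∅ : Set ℕ)ᶜ := this
    rw [Set.compl_empty] at this
    exact this huniv
  refine ⟨Ultrafilter.of F, fun A hA => ?_⟩
  by_contra hPA
  have hAc : Aᶜ ∈ F := by
    show ¬ P Aᶜᶜ
    rwa [compl_compl]
  have hAcV : Aᶜ ∈ Ultrafilter.of F := Ultrafilter.of_le F hAc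
  exact (Ultrafilter.compl_mem_iff_notMem.1 hAcV) hA

-- transfer along FE
lemma FE.hasAPs {A B : Set ℕ} (h : FE A B) (hA : HasAPs A) : HasAPs B := by
  intro k
  obtain ⟨a, d, hd, hi⟩ := hA k
  have hsub : ((Finset.range k).image (fun i => a + i * d) : Set ℕ) ⊆ A := by
    intro x hx
    simp only [Finset.coe_image, Set.mem_image, Finset.coe_range, Set.mem_Iio] at hx
    obtain ⟨i, hik, rfl⟩ := hx
    exact hi i hik
  obtain ⟨t, ht⟩ := h _ hsub
  refine ⟨t + a, d, hd, fun i hik => ?_⟩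
  have : t + (a + i * d) ∈ B := ht _ (Finset.mem_image.2 ⟨i, Finset.mem_range.2 hik, rfl⟩)
  simpa [add_assoc] using this

lemma FE.pws {A B : Set ℕ} (h : FE A B) (hA : PWSyndetic A) : PWSyndetic B := by
  classical
  obtain ⟨n, hn⟩ := hA
  refine ⟨n, fun L => ?_⟩
  obtain ⟨s, hs⟩ := hn L
  set F : Finset ℕ := (Finset.range (s + L + 1)).filter (fun a => a ∈ A) with hF
  have hsub : (F : Set ℕ) ⊆ A := by
    intro x hx
    simp only [hF, Finset.coe_filter, Set.mem_setOf_eq] at hx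
    exact hx.2
  obtain ⟨t, ht⟩ := h F hsub
  refine ⟨t + s, fun j hj => ?_⟩
  obtain ⟨i, hi, a, ha, hEq⟩ := hs j hj
  have haF : a ∈ F := by
    simp only [hF, Finset.mem_filter, Finset.mem_range]
    exact ⟨by omega, ha⟩
  exact ⟨i, hi, t + a, ht a haF, by omega⟩

lemma pws_bd {A : Set ℕ} (h : PWSyndetic A) : 0 < BD A := by
  obtain ⟨n, hn⟩ := h
  set f : ℕ → ℝ := fun M => (⨆ k : ℕ, ((A ∩ Set.Icc (k + 1) (k + M)).ncard : ℝ)) / M with hf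
  have hcount : ∀ M k : ℕ, ((A ∩ Set.Icc (k + 1) (k + M)).ncard : ℝ) ≤ M := by
    intro M k
    have h1 : (A ∩ Set.Icc (k + 1) (k + M)).ncard ≤ (Set.Icc (k+1) (k+M)).ncard :=
      Set.ncard_le_ncard Set.inter_subset_right (Set.finite_Icc _ _)
    have h2 : (Set.Icc (k+1) (k+M)).ncard = M := by
      rw [← Finset.coe_Icc, Set.ncard_coe_finset, Nat.card_Icc]
      omega
    calc ((A ∩ Set.Icc (k + 1) (k + M)).ncard : ℝ) ≤ ((Set.Icc (k+1) (k+M)).ncard : ℝ) := by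
          exact_mod_cast h1
      _ = M := by rw [h2]
  have hfbd : ∀ M, f M ≤ 1 := by
    intro M
    rcases Nat.eq_zero_or_pos M with rfl | hM
    · simp [hf]
    · rw [hf, div_le_one (by exact_mod_cast hM)]
      exact ciSup_le fun k => hcount M k
  have hbound : Filter.IsBoundedUnder (· ≤ ·) Filter.atTop f :=
    Filter.isBoundedUnder_of ⟨1, hfbd⟩
  have hfreq : ∃ᶠ M in Filter.atTop, ((n : ℝ) + 1)⁻¹ ≤ f M := by
    rw [Filter.frequently_atTop]
    intro M0
    set N := max M0 1 with hN
    set M := (n + 1) * (N + 1) with hM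
    have hM0N : M0 ≤ N := le_max_left M0 1
    have hNM : N ≤ M := le_trans (by omega) (Nat.le_mul_of_pos_left (N+1) (by omega))
    refine ⟨M, by omega, ?_⟩
    obtain ⟨s, hs⟩ := hn ((n + 1) * (N + 2))
    -- choose elements of A near the points s + (j+1)*(n+1)
    have hpt : ∀ j : ℕ, ∃ a : ℕ, j ≤ N → a ∈ A ∧ ∃ i ≤ n, s + (j+1)*(n+1) = a + i := by
      intro j
      by_cases hj : j ≤ N
      · have : s + (j+1)*(n+1) ∈ {m : ℕ | ∃ i ≤ n, ∃ a ∈ A, m = a + i} := by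
          apply hs
          nlinarith
        obtain ⟨i, hi, a, ha, hEq⟩ := this
        exact ⟨a, fun _ => ⟨ha, i, hi, hEq⟩⟩
      · exact ⟨0, fun hc => absurd hc hj⟩
    choose g hg using hpt
    have hgmem : ∀ j ≤ N, g j ∈ A ∩ Set.Icc (s + 1) (s + M) := by
      intro j hj
      obtain ⟨hA, i, hi, hEq⟩ := hg j hj
      have e1 : (j+1)*(n+1) ≤ (n+1)*(N+1) := by nlinarith
      have e2 : n + 1 ≤ (j+1)*(n+1) := by nlinarith
      have hMe : M = (n+1)*(N+1) := hM
      exact ⟨hA, by omega, by omega⟩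
    have hglt : ∀ j j' : ℕ, j < j' → j' ≤ N → g j < g j' := by
      intro j j' hjj' hj'
      obtain ⟨_, i, hi, hE⟩ := hg j (by omega)
      obtain ⟨_, i', hi', hE'⟩ := hg j' hj'
      have e : (j+1)*(n+1) + (n+1) ≤ (j'+1)*(n+1) := by nlinarith
      omega
    have hginj : Set.InjOn g (Finset.range (N+1) : Set ℕ) := by
      intro j hj j' hj' hEq
      simp only [Finset.coe_range, Set.mem_Iio] at hj hj'
      by_contra hne
      rcases Nat.lt_or_ge j j' with hlt | hge
      · exact absurd hEq (Nat.ne_of_lt (hglt j j' hlt (by omega)))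
      · have hlt : j' < j := by omega
        exact absurd hEq.symm (Nat.ne_of_lt (hglt j' j hlt (by omega)))
    set Fn : Finset ℕ := (Finset.range (N+1)).image g with hFn
    have hcard : Fn.card = N + 1 := by
      rw [hFn, Finset.card_image_of_injOn (by exact_mod_cast hginj), Finset.card_range]
    have hFsub : (Fn : Set ℕ) ⊆ A ∩ Set.Icc (s + 1) (s + M) := by
      intro x hx
      simp only [hFn, Finset.coe_image, Set.mem_image, Finset.coe_range, Set.mem_Iio] at hx
      obtain ⟨j, hj, rfl⟩ := hx
      exact hgmem j (by omega)
    have hNcard : (N + 1 : ℝ) ≤ ((A ∩ Set.Icc (s + 1) (s + M)).ncard : ℝ) := by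
      have hfin : (A ∩ Set.Icc (s + 1) (s + M)).Finite :=
        Set.Finite.inter_of_right (Set.finite_Icc _ _) _
      have := Set.ncard_le_ncard hFsub hfin
      rw [Set.ncard_coe_finset, hcard] at this
      exact_mod_cast this
    have hsup : ((A ∩ Set.Icc (s + 1) (s + M)).ncard : ℝ) ≤
        ⨆ k : ℕ, ((A ∩ Set.Icc (k + 1) (k + M)).ncard : ℝ) := by
      apply le_ciSup (f := fun k : ℕ => ((A ∩ Set.Icc (k + 1) (k + M)).ncard : ℝ))
      exact ⟨M, Set.forall_mem_range.2 fun k => hcount M k⟩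
    rw [hf, le_div_iff₀ (by positivity)]
    have hMval : (M : ℝ) = ((n : ℝ) + 1) * ((N : ℝ) + 1) := by
      rw [hM]; push_cast; ring
    have : ((n : ℝ) + 1)⁻¹ * (M : ℝ) = (N : ℝ) + 1 := by
      rw [hMval]; field_simp
    rw [this]
    exact le_trans hNcard hsup
  have hlim : ((n : ℝ) + 1)⁻¹ ≤ BD A := by
    exact Filter.le_limsup_of_frequently_le hfreq hbound
  have : (0 : ℝ) < ((n : ℝ) + 1)⁻¹ := by positivity
  linarith


theorem maximal_ultrafilter_combinatorics (U : Ultrafilter ℕ)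
    (hU : ∀ V : Ultrafilter ℕ, UFE V U) :
    ∀ A ∈ U, 0 < BD A ∧ HasAPs A ∧ PWSyndetic A := by
  obtain ⟨Vap, hVap⟩ := exists_ultrafilter_forall HasAPs
    (fun h hX => hasAPs_mono h hX) hasAPs_univ not_hasAPs_empty
    (fun X Y => hasAPs_union)
  obtain ⟨Vp, hVp⟩ := exists_ultrafilter_forall PWSyndetic
    (fun h hX => pws_mono h hX) pws_univ not_pws_empty
    (fun X Y => pws_union)
  intro A hA
  obtain ⟨A1, hA1, hFE1⟩ := hU Vap A hA
  obtain ⟨A2, hA2, hFE2⟩ := hU Vp A hA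
  have hpws : PWSyndetic A := hFE2.pws (hVp A2 hA2)
  exact ⟨pws_bd hpws, hFE1.hasAPs (hVap A1 hA1), hpws⟩
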